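/- arXiv:2007.01653 — 4 statements merged into one kernel-verified Lean document; each statement's English description precedes it below -/
import Mathlib

section
/- In the HAM setting, the map $A=(A_1,A_2)$ defined on pairs $\phi=(\phi_1,\phi_2)$ of bounded measurable functions on $[0,1]$ by $A_i[\phi](x)=\phi_i(x)+c_{i0}N_i[\phi](x)$ ($i=1,2$) is Lipschitz with constant $\delta_{c_0}$ for the norm $\|\cdot\|$: for any two pairs $\phi,\psi$ of bounded measurable functions on $[0,1]$, $\|A[\phi]-A[\psi]\|\le\delta_{c_0}\,\|\phi-\psi\|$. -/
open MeasureTheory Set Filter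

/-- The nonlinear integral operator `N_i[φ](x) = φ_i(x) - α_i - ∫₀¹ G_i(x,s) p_i(s) f_i(s,φ₁(s),φ₂(s)) ds`.
`φi` is the leading component (φ₁ for `i = 1`, φ₂ for `i = 2`). -/
noncomputable def hamN (G : ℝ → ℝ → ℝ) (p : ℝ → ℝ) (f : ℝ → ℝ → ℝ → ℝ)
    (α : ℝ) (φi φ₁ φ₂ : ℝ → ℝ) (x : ℝ) : ℝ :=
  φi x - α - ∫ s in Icc (0:ℝ) 1, G x s * p s * f s (φ₁ s) (φ₂ s)

/-- The norm `‖u‖ = sup_{x ∈ [0,1]} max (|u₁ x|) (|u₂ x|)` on pairs of functions. -/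
noncomputable def hamNorm (u₁ u₂ : ℝ → ℝ) : ℝ :=
  ⨆ x : Icc (0:ℝ) 1, max |u₁ (x : ℝ)| |u₂ (x : ℝ)|

/-! Writing `gᵢ = Gᵢ(x,·) pᵢ`, the difference `Aᵢ[φ](x) - Aᵢ[ψ](x)` equals
`(1 + cᵢ₀)(φᵢ - ψᵢ)(x) - cᵢ₀ ∫₀¹ gᵢ(s) (fᵢ(s, φ(s)) - fᵢ(s, ψ(s))) ds`. The first term is at most
`|1 + cᵢ₀| ‖φ - ψ‖`, and by the Lipschitz bound on `fᵢ` the integrand of the second is at most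
`|gᵢ(s)| (l₁ + l₂) ‖φ - ψ‖ ≤ 2 L |gᵢ(s)| ‖φ - ψ‖`, so the second term is at most
`2 L M |cᵢ₀| ‖φ - ψ‖`. -/

section Composition

variable {S : Set ℝ} {f : ℝ → ℝ → ℝ → ℝ} {φ₁ φ₂ : ℝ → ℝ}

theorem aestronglyMeasurable_comp_of_continuousOn (μ : Measure ℝ) (hS : MeasurableSet S)
    (hf : ContinuousOn (fun q : ℝ × ℝ × ℝ => f q.1 q.2.1 q.2.2) (S ×ˢ (univ : Set (ℝ × ℝ))))
    (h₁ : Measurable (S.domRestrict φ₁)) (h₂ : Measurable (S.domRestrict φ₂)) :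
    AEStronglyMeasurable (fun s => f s (φ₁ s) (φ₂ s)) (μ.restrict S) := by
  rw [← map_comap_subtype_coe hS,
    (MeasurableEmbedding.subtype_coe hS).aestronglyMeasurable_map_iff]
  have hgraph : Measurable fun y : S =>
      (⟨((y : ℝ), φ₁ y, φ₂ y), y.2, trivial⟩ : (S ×ˢ (univ : Set (ℝ × ℝ)))) :=
    (measurable_subtype_coe.prodMk (h₁.prodMk h₂)).subtype_mk
  exact (hf.domRestrict.measurable.comp hgraph).aestronglyMeasurable

theorem exists_abs_comp_le_of_continuousOn (hS : IsCompact S)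
    (hf : ContinuousOn (fun q : ℝ × ℝ × ℝ => f q.1 q.2.1 q.2.2) (S ×ˢ (univ : Set (ℝ × ℝ))))
    (h₁ : ∃ C, ∀ x ∈ S, |φ₁ x| ≤ C) (h₂ : ∃ C, ∀ x ∈ S, |φ₂ x| ≤ C) :
    ∃ C, ∀ s ∈ S, |f s (φ₁ s) (φ₂ s)| ≤ C := by
  obtain ⟨B₁, hB₁⟩ := h₁
  obtain ⟨B₂, hB₂⟩ := h₂
  obtain ⟨C, hC⟩ := (hS.prod (isCompact_Icc.prod isCompact_Icc)).exists_bound_of_continuousOn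
    (hf.mono (prod_mono_right (subset_univ (Icc (-B₁) B₁ ×ˢ Icc (-B₂) B₂))))
  exact ⟨C, fun s hs => hC (s, φ₁ s, φ₂ s) ⟨hs, abs_le.mp (hB₁ s hs), abs_le.mp (hB₂ s hs)⟩⟩

theorem integrableOn_mul_comp_of_continuousOn {μ : Measure ℝ} {g : ℝ → ℝ}
    (hg : IntegrableOn g S μ) (hSc : IsCompact S) (hSm : MeasurableSet S)
    (hf : ContinuousOn (fun q : ℝ × ℝ × ℝ => f q.1 q.2.1 q.2.2) (S ×ˢ (univ : Set (ℝ × ℝ))))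
    (hm₁ : Measurable (S.domRestrict φ₁)) (hm₂ : Measurable (S.domRestrict φ₂))
    (hb₁ : ∃ C, ∀ x ∈ S, |φ₁ x| ≤ C) (hb₂ : ∃ C, ∀ x ∈ S, |φ₂ x| ≤ C) :
    IntegrableOn (fun s => g s * f s (φ₁ s) (φ₂ s)) S μ := by
  obtain ⟨C, hC⟩ := exists_abs_comp_le_of_continuousOn hSc hf hb₁ hb₂
  exact hg.mul_bdd (aestronglyMeasurable_comp_of_continuousOn μ hSm hf hm₁ hm₂)
    ((ae_restrict_mem hSm).mono hC)

end Composition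

theorem abs_setIntegral_mul_sub_le {α : Type*} [MeasurableSpace α] {μ : Measure α} {S : Set α}
    {g u v : α → ℝ} {K : ℝ} (hS : MeasurableSet S) (hg : IntegrableOn g S μ)
    (hu : IntegrableOn (fun s => g s * u s) S μ) (hv : IntegrableOn (fun s => g s * v s) S μ)
    (huv : ∀ s ∈ S, |u s - v s| ≤ K) :
    |(∫ s in S, g s * u s ∂μ) - ∫ s in S, g s * v s ∂μ| ≤ (∫ s in S, |g s| ∂μ) * K := by
  rw [← integral_sub hu hv, ← integral_mul_const, ← Real.norm_eq_abs]
  refine norm_integral_le_of_norm_le (hg.abs.mul_const K) ?_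
  filter_upwards [ae_restrict_mem hS] with s hs
  rw [Real.norm_eq_abs, ← mul_sub, abs_mul]
  exact mul_le_mul_of_nonneg_left (huv s hs) (abs_nonneg _)

theorem abs_add_mul_hamN_sub_le {G : ℝ → ℝ → ℝ} {p : ℝ → ℝ} {f : ℝ → ℝ → ℝ → ℝ}
    {α c M K x : ℝ} {φi φ₁ φ₂ ψi ψ₁ ψ₂ : ℝ → ℝ}
    (hg : IntegrableOn (fun s => G x s * p s) (Icc 0 1))
    (hM : (∫ s in Icc (0:ℝ) 1, |G x s * p s|) ≤ M)
    (hφ : IntegrableOn (fun s => G x s * p s * f s (φ₁ s) (φ₂ s)) (Icc 0 1))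
    (hψ : IntegrableOn (fun s => G x s * p s * f s (ψ₁ s) (ψ₂ s)) (Icc 0 1))
    (hK : ∀ s ∈ Icc (0:ℝ) 1, |f s (φ₁ s) (φ₂ s) - f s (ψ₁ s) (ψ₂ s)| ≤ K) :
    |(φi x + c * hamN G p f α φi φ₁ φ₂ x) - (ψi x + c * hamN G p f α ψi ψ₁ ψ₂ x)|
      ≤ |1 + c| * |φi x - ψi x| + |c| * (M * K) := by
  have hK0 : 0 ≤ K := (abs_nonneg _).trans (hK 0 ⟨le_rfl, zero_le_one⟩)
  have hI := (abs_setIntegral_mul_sub_le measurableSet_Icc hg hφ hψ hK).trans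
    (mul_le_mul_of_nonneg_right hM hK0)
  calc _ = |(1 + c) * (φi x - ψi x) - c * ((∫ s in Icc (0:ℝ) 1, G x s * p s * f s (φ₁ s) (φ₂ s))
          - ∫ s in Icc (0:ℝ) 1, G x s * p s * f s (ψ₁ s) (ψ₂ s))| := by
        congr 1; simp only [hamN]; ring
    _ ≤ _ := by
        refine (abs_sub _ _).trans ?_
        rw [abs_mul, abs_mul]
        gcongr

theorem nonneg_of_abs_sub_le_mul_add_mul {F : ℝ → ℝ → ℝ} {l₁ l₂ : ℝ}
    (h : ∀ z w z' w' : ℝ, |F z w - F z' w'| ≤ l₁ * |z - z'| + l₂ * |w - w'|) :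
    0 ≤ l₁ ∧ 0 ≤ l₂ := by
  have h₁ := h 0 0 1 0
  have h₂ := h 0 0 0 1
  norm_num at h₁ h₂
  exact ⟨(abs_nonneg _).trans h₁, (abs_nonneg _).trans h₂⟩

theorem abs_comp_sub_comp_le_of_lipschitz {S : Set ℝ} {f : ℝ → ℝ → ℝ → ℝ} {l₁ l₂ D : ℝ}
    {φ₁ φ₂ ψ₁ ψ₂ : ℝ → ℝ}
    (hLip : ∀ x ∈ S, ∀ z w z' w' : ℝ, |f x z w - f x z' w'| ≤ l₁ * |z - z'| + l₂ * |w - w'|)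
    (hD₁ : ∀ s ∈ S, |φ₁ s - ψ₁ s| ≤ D) (hD₂ : ∀ s ∈ S, |φ₂ s - ψ₂ s| ≤ D) :
    ∀ s ∈ S, |f s (φ₁ s) (φ₂ s) - f s (ψ₁ s) (ψ₂ s)| ≤ (l₁ + l₂) * D := by
  intro s hs
  obtain ⟨hl₁, hl₂⟩ := nonneg_of_abs_sub_le_mul_add_mul (hLip s hs)
  calc _ ≤ l₁ * |φ₁ s - ψ₁ s| + l₂ * |φ₂ s - ψ₂ s| := hLip s hs _ _ _ _
    _ ≤ l₁ * D + l₂ * D := by gcongr <;> [exact hD₁ s hs; exact hD₂ s hs]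
    _ = (l₁ + l₂) * D := by ring

theorem exists_abs_sub_le {u v : ℝ → ℝ} {S : Set ℝ} (hu : ∃ C, ∀ x ∈ S, |u x| ≤ C)
    (hv : ∃ C, ∀ x ∈ S, |v x| ≤ C) : ∃ C, ∀ x ∈ S, |u x - v x| ≤ C := by
  obtain ⟨C₁, hC₁⟩ := hu
  obtain ⟨C₂, hC₂⟩ := hv
  exact ⟨C₁ + C₂, fun x hx => (abs_sub _ _).trans (add_le_add (hC₁ x hx) (hC₂ x hx))⟩

section HamNorm

variable {u₁ u₂ : ℝ → ℝ}

theorem bddAbove_range_max_abs (h₁ : ∃ C, ∀ x ∈ Icc (0:ℝ) 1, |u₁ x| ≤ C)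
    (h₂ : ∃ C, ∀ x ∈ Icc (0:ℝ) 1, |u₂ x| ≤ C) :
    BddAbove (range fun x : Icc (0:ℝ) 1 => max |u₁ x| |u₂ x|) := by
  obtain ⟨C₁, hC₁⟩ := h₁
  obtain ⟨C₂, hC₂⟩ := h₂
  refine ⟨max C₁ C₂, ?_⟩
  rintro _ ⟨x, rfl⟩
  exact max_le_max (hC₁ x x.2) (hC₂ x x.2)

theorem max_abs_le_hamNorm (hb : BddAbove (range fun x : Icc (0:ℝ) 1 => max |u₁ x| |u₂ x|))
    {x : ℝ} (hx : x ∈ Icc (0:ℝ) 1) : max |u₁ x| |u₂ x| ≤ hamNorm u₁ u₂ :=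
  le_ciSup hb ⟨x, hx⟩

theorem hamNorm_nonneg : 0 ≤ hamNorm u₁ u₂ :=
  Real.iSup_nonneg fun _ => (abs_nonneg _).trans (le_max_left _ _)

theorem hamNorm_le {C : ℝ} (h : ∀ x ∈ Icc (0:ℝ) 1, max |u₁ x| |u₂ x| ≤ C) :
    hamNorm u₁ u₂ ≤ C :=
  have : Nonempty (Icc (0:ℝ) 1) := ⟨⟨0, le_rfl, zero_le_one⟩⟩
  ciSup_le fun x => h x x.2

end HamNorm

theorem stmt0_general (G₁ G₂ : ℝ → ℝ → ℝ) (p₁ p₂ : ℝ → ℝ) (f₁ f₂ : ℝ → ℝ → ℝ → ℝ)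
    (l₁ l₂ L M α₁ α₂ c₁₀ c₂₀ δ : ℝ)
    (hInt₁ : ∀ x ∈ Icc (0:ℝ) 1, IntegrableOn (fun s => G₁ x s * p₁ s) (Icc (0:ℝ) 1))
    (hInt₂ : ∀ x ∈ Icc (0:ℝ) 1, IntegrableOn (fun s => G₂ x s * p₂ s) (Icc (0:ℝ) 1))
    (hM0 : 0 ≤ M)
    (hM₁ : ∀ x ∈ Icc (0:ℝ) 1, (∫ s in Icc (0:ℝ) 1, |G₁ x s * p₁ s|) ≤ M)
    (hM₂ : ∀ x ∈ Icc (0:ℝ) 1, (∫ s in Icc (0:ℝ) 1, |G₂ x s * p₂ s|) ≤ M)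
    (hf₁c : ContinuousOn (fun q : ℝ × ℝ × ℝ => f₁ q.1 q.2.1 q.2.2)
      (Icc (0:ℝ) 1 ×ˢ (univ : Set (ℝ × ℝ))))
    (hf₂c : ContinuousOn (fun q : ℝ × ℝ × ℝ => f₂ q.1 q.2.1 q.2.2)
      (Icc (0:ℝ) 1 ×ˢ (univ : Set (ℝ × ℝ))))
    (hLip₁ : ∀ x ∈ Icc (0:ℝ) 1, ∀ z w z' w' : ℝ,
      |f₁ x z w - f₁ x z' w'| ≤ l₁ * |z - z'| + l₂ * |w - w'|)
    (hLip₂ : ∀ x ∈ Icc (0:ℝ) 1, ∀ z w z' w' : ℝ,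
      |f₂ x z w - f₂ x z' w'| ≤ l₁ * |z - z'| + l₂ * |w - w'|)
    (hL : L = max l₁ l₂)
    (hδ : δ = max |1 + c₁₀| |1 + c₂₀| + 2 * L * M * max |c₁₀| |c₂₀|)
    (φ₁ φ₂ ψ₁ ψ₂ : ℝ → ℝ)
    (hφ₁m : Measurable ((Icc (0:ℝ) 1).restrict φ₁))
    (hφ₂m : Measurable ((Icc (0:ℝ) 1).restrict φ₂))
    (hψ₁m : Measurable ((Icc (0:ℝ) 1).restrict ψ₁))
    (hψ₂m : Measurable ((Icc (0:ℝ) 1).restrict ψ₂))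
    (hφ₁b : ∃ C, ∀ x ∈ Icc (0:ℝ) 1, |φ₁ x| ≤ C)
    (hφ₂b : ∃ C, ∀ x ∈ Icc (0:ℝ) 1, |φ₂ x| ≤ C)
    (hψ₁b : ∃ C, ∀ x ∈ Icc (0:ℝ) 1, |ψ₁ x| ≤ C)
    (hψ₂b : ∃ C, ∀ x ∈ Icc (0:ℝ) 1, |ψ₂ x| ≤ C) :
    hamNorm
      (fun x => (φ₁ x + c₁₀ * hamN G₁ p₁ f₁ α₁ φ₁ φ₁ φ₂ x)
        - (ψ₁ x + c₁₀ * hamN G₁ p₁ f₁ α₁ ψ₁ ψ₁ ψ₂ x))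
      (fun x => (φ₂ x + c₂₀ * hamN G₂ p₂ f₂ α₂ φ₂ φ₁ φ₂ x)
        - (ψ₂ x + c₂₀ * hamN G₂ p₂ f₂ α₂ ψ₂ ψ₁ ψ₂ x))
      ≤ δ * hamNorm (fun x => φ₁ x - ψ₁ x) (fun x => φ₂ x - ψ₂ x) := by
  have h0 : (0:ℝ) ∈ Icc (0:ℝ) 1 := ⟨le_rfl, zero_le_one⟩
  obtain ⟨hl₁, hl₂⟩ := nonneg_of_abs_sub_le_mul_add_mul (hLip₁ 0 h0)
  set D := hamNorm (fun x => φ₁ x - ψ₁ x) (fun x => φ₂ x - ψ₂ x)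
  have hbdd := bddAbove_range_max_abs (exists_abs_sub_le hφ₁b hψ₁b) (exists_abs_sub_le hφ₂b hψ₂b)
  have hD₁ : ∀ s ∈ Icc (0:ℝ) 1, |φ₁ s - ψ₁ s| ≤ D := fun s hs =>
    (max_abs_le_hamNorm hbdd hs).trans' (le_max_left _ _)
  have hD₂ : ∀ s ∈ Icc (0:ℝ) 1, |φ₂ s - ψ₂ s| ≤ D := fun s hs =>
    (max_abs_le_hamNorm hbdd hs).trans' (le_max_right _ _)
  have hδD : ∀ c : ℝ, |1 + c| ≤ max |1 + c₁₀| |1 + c₂₀| → |c| ≤ max |c₁₀| |c₂₀| →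
      ∀ d, 0 ≤ d → d ≤ D → |1 + c| * d + |c| * (M * ((l₁ + l₂) * D)) ≤ δ * D := by
    intro c h1 hc d hd0 hd
    have hl : l₁ + l₂ ≤ 2 * L := by rw [hL]; linarith [le_max_left l₁ l₂, le_max_right l₁ l₂]
    have hD0 : 0 ≤ D := hamNorm_nonneg
    calc |1 + c| * d + |c| * (M * ((l₁ + l₂) * D))
        ≤ max |1 + c₁₀| |1 + c₂₀| * D + max |c₁₀| |c₂₀| * (M * (2 * L * D)) := by gcongr
      _ = δ * D := by rw [hδ]; ring
  refine hamNorm_le fun x hx => max_le ?_ ?_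
  · exact (abs_add_mul_hamN_sub_le (hInt₁ x hx) (hM₁ x hx)
      (integrableOn_mul_comp_of_continuousOn (hInt₁ x hx) isCompact_Icc measurableSet_Icc hf₁c
        hφ₁m hφ₂m hφ₁b hφ₂b)
      (integrableOn_mul_comp_of_continuousOn (hInt₁ x hx) isCompact_Icc measurableSet_Icc hf₁c
        hψ₁m hψ₂m hψ₁b hψ₂b) (abs_comp_sub_comp_le_of_lipschitz hLip₁ hD₁ hD₂)).trans
      (hδD c₁₀ (le_max_left _ _) (le_max_left _ _) _ (abs_nonneg _) (hD₁ x hx))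
  · exact (abs_add_mul_hamN_sub_le (hInt₂ x hx) (hM₂ x hx)
      (integrableOn_mul_comp_of_continuousOn (hInt₂ x hx) isCompact_Icc measurableSet_Icc hf₂c
        hφ₁m hφ₂m hφ₁b hφ₂b)
      (integrableOn_mul_comp_of_continuousOn (hInt₂ x hx) isCompact_Icc measurableSet_Icc hf₂c
        hψ₁m hψ₂m hψ₁b hψ₂b) (abs_comp_sub_comp_le_of_lipschitz hLip₂ hD₁ hD₂)).trans
      (hδD c₂₀ (le_max_right _ _) (le_max_right _ _) _ (abs_nonneg _) (hD₂ x hx))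

theorem stmt0 (G₁ G₂ : ℝ → ℝ → ℝ) (p₁ p₂ : ℝ → ℝ) (f₁ f₂ : ℝ → ℝ → ℝ → ℝ)
    (l₁ l₂ L M α₁ α₂ c₁₀ c₂₀ δ : ℝ)
    (hInt₁ : ∀ x ∈ Icc (0:ℝ) 1, IntegrableOn (fun s => G₁ x s * p₁ s) (Icc (0:ℝ) 1))
    (hInt₂ : ∀ x ∈ Icc (0:ℝ) 1, IntegrableOn (fun s => G₂ x s * p₂ s) (Icc (0:ℝ) 1))
    (hM0 : 0 ≤ M)
    (hM₁ : ∀ x ∈ Icc (0:ℝ) 1, (∫ s in Icc (0:ℝ) 1, |G₁ x s * p₁ s|) ≤ M)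
    (hM₂ : ∀ x ∈ Icc (0:ℝ) 1, (∫ s in Icc (0:ℝ) 1, |G₂ x s * p₂ s|) ≤ M)
    (hf₁c : ContinuousOn (fun q : ℝ × ℝ × ℝ => f₁ q.1 q.2.1 q.2.2)
      (Icc (0:ℝ) 1 ×ˢ (univ : Set (ℝ × ℝ))))
    (hf₂c : ContinuousOn (fun q : ℝ × ℝ × ℝ => f₂ q.1 q.2.1 q.2.2)
      (Icc (0:ℝ) 1 ×ˢ (univ : Set (ℝ × ℝ))))
    (hLip₁ : ∀ x ∈ Icc (0:ℝ) 1, ∀ z w z' w' : ℝ,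
      |f₁ x z w - f₁ x z' w'| ≤ l₁ * |z - z'| + l₂ * |w - w'|)
    (hLip₂ : ∀ x ∈ Icc (0:ℝ) 1, ∀ z w z' w' : ℝ,
      |f₂ x z w - f₂ x z' w'| ≤ l₁ * |z - z'| + l₂ * |w - w'|)
    (hL : L = max l₁ l₂) (hc₁ : c₁₀ ≠ 0) (hc₂ : c₂₀ ≠ 0)
    (hδ : δ = max |1 + c₁₀| |1 + c₂₀| + 2 * L * M * max |c₁₀| |c₂₀|)
    (φ₁ φ₂ ψ₁ ψ₂ : ℝ → ℝ)
    (hφ₁m : Measurable ((Icc (0:ℝ) 1).restrict φ₁))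
    (hφ₂m : Measurable ((Icc (0:ℝ) 1).restrict φ₂))
    (hψ₁m : Measurable ((Icc (0:ℝ) 1).restrict ψ₁))
    (hψ₂m : Measurable ((Icc (0:ℝ) 1).restrict ψ₂))
    (hφ₁b : ∃ C, ∀ x ∈ Icc (0:ℝ) 1, |φ₁ x| ≤ C)
    (hφ₂b : ∃ C, ∀ x ∈ Icc (0:ℝ) 1, |φ₂ x| ≤ C)
    (hψ₁b : ∃ C, ∀ x ∈ Icc (0:ℝ) 1, |ψ₁ x| ≤ C)
    (hψ₂b : ∃ C, ∀ x ∈ Icc (0:ℝ) 1, |ψ₂ x| ≤ C) :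
    hamNorm
      (fun x => (φ₁ x + c₁₀ * hamN G₁ p₁ f₁ α₁ φ₁ φ₁ φ₂ x)
        - (ψ₁ x + c₁₀ * hamN G₁ p₁ f₁ α₁ ψ₁ ψ₁ ψ₂ x))
      (fun x => (φ₂ x + c₂₀ * hamN G₂ p₂ f₂ α₂ φ₂ φ₁ φ₂ x)
        - (ψ₂ x + c₂₀ * hamN G₂ p₂ f₂ α₂ ψ₂ ψ₁ ψ₂ x))
      ≤ δ * hamNorm (fun x => φ₁ x - ψ₁ x) (fun x => φ₂ x - ψ₂ x) :=
  stmt0_general G₁ G₂ p₁ p₂ f₁ f₂ l₁ l₂ L M α₁ α₂ c₁₀ c₂₀ δ hInt₁ hInt₂ hM0 hM₁ hM₂ hf₁c hf₂c hLip₁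
    hLip₂ hL hδ φ₁ φ₂ ψ₁ ψ₂ hφ₁m hφ₂m hψ₁m hψ₂m hφ₁b hφ₂b hψ₁b hψ₂b
end

section
/- (Green's function representation, shape factor $k\ne 1$.) Let $k\ge 0$ be a real number with $k\ne 1$, let $a,b,c$ be reals with $a\ne 0$, and let $F\colon[0,1]\to\mathbb{R}$ be continuous. Define $G(x,s)=\dfrac{\max(x,s)^{1-k}-1}{1-k}-\dfrac{b}{a}$ and $y(x)=\dfrac{c}{a}+\int_0^1 G(x,s)\,s^{k}F(s)\,ds$ for $x\in[0,1]$. Then: (i) $y$ is differentiable on $(0,1]$ with $y'(x)=x^{-k}\int_0^x s^{k}F(s)\,ds$; (ii) the function $x\mapsto x^{k}y'(x)$ is differentiable on $(0,1)$ with $\dfrac{d}{dx}\big(x^{k}y'(x)\big)=x^{k}F(x)$ for all $x\in(0,1)$; (iii) $\lim_{x\to 0^+}y'(x)=0$; and (iv) $a\,y(1)+b\,y'(1)=c$. -/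
/-!
Write `g s = s ^ k * F s` and `Φ t = (t ^ (1 - k) - 1) / (1 - k) - b / a`, so that
`G x s * s ^ k * F s = Φ (max x s) * g s`. Splitting the integral at `s = x` gives
`∫₀¹ Φ (max x s) g s ds = Φ x ∫₀ˣ g + ∫ₓ¹ Φ g`, whose derivative is `Φ' x ∫₀ˣ g = x ^ (-k) ∫₀ˣ g`:
the two boundary terms `± Φ x g x` cancel. The product `Φ g` stays continuous at `0` because
`s ^ (1 - k) * s ^ k = s`. The limit at `0` follows from `|∫₀ˣ g| ≤ x ^ k * x * sup |F|`.
-/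

open MeasureTheory Set Filter Topology intervalIntegral

section GreenKernel

variable {f g Φ : ℝ → ℝ} {a b x Φ' : ℝ}

theorem hasDerivWithinAt_integral_of_continuousOn_Icc (hf : ContinuousOn f (Icc a b))
    (hx : x ∈ Icc a b) :
    HasDerivWithinAt (fun u => ∫ s in a..u, f s) (f x) (Icc a b) x := by
  have : Fact (x ∈ Icc a b) := ⟨hx⟩
  exact integral_hasDerivWithinAt_right
    ((hf.mono (Icc_subset_Icc_right hx.2)).intervalIntegrable_of_Icc hx.1)
    (hf.stronglyMeasurableAtFilter_nhdsWithin measurableSet_Icc x) (hf x hx)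

theorem integral_mul_comp_max (hx : x ∈ Icc a b) (hg : IntervalIntegrable g volume a x)
    (hΦg : IntervalIntegrable (fun s => Φ s * g s) volume x b) :
    ∫ s in a..b, Φ (max x s) * g s = Φ x * (∫ s in a..x, g s) + ∫ s in x..b, Φ s * g s := by
  have left : EqOn (fun s => Φ (max x s) * g s) (fun s => Φ x * g s) (uIcc a x) := by
    intro s hs
    rw [uIcc_of_le hx.1] at hs
    simp only [max_eq_left hs.2]
  have right : EqOn (fun s => Φ (max x s) * g s) (fun s => Φ s * g s) (uIcc x b) := by
    intro s hs
    rw [uIcc_of_le hx.2] at hs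
    simp only [max_eq_right hs.1]
  rw [← integral_add_adjacent_intervals
      ((hg.const_mul (Φ x)).congr (left.symm.mono Ioc_subset_Icc_self))
      (hΦg.congr (right.symm.mono Ioc_subset_Icc_self)),
    integral_congr left, integral_congr right, intervalIntegral.integral_const_mul]

theorem hasDerivWithinAt_integral_mul_comp_max (hg : ContinuousOn g (Icc a b))
    (hΦg : ContinuousOn (fun s => Φ s * g s) (Icc a b)) (hΦ : HasDerivAt Φ Φ' x)
    (hx : x ∈ Icc a b) :
    HasDerivWithinAt (fun t => ∫ s in a..b, Φ (max t s) * g s)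
      (Φ' * ∫ s in a..x, g s) (Icc a b) x := by
  have hab : a ≤ b := hx.1.trans hx.2
  have split : ∀ t ∈ Icc a b, ∫ s in a..b, Φ (max t s) * g s =
      Φ t * (∫ s in a..t, g s) + ((∫ s in a..b, Φ s * g s) - ∫ s in a..t, Φ s * g s) := by
    intro t ht
    have hΦg_int : IntervalIntegrable (fun s => Φ s * g s) volume a b :=
      hΦg.intervalIntegrable_of_Icc hab
    rw [integral_mul_comp_max ht
        ((hg.mono (Icc_subset_Icc_right ht.2)).intervalIntegrable_of_Icc ht.1)
        ((hΦg.mono (Icc_subset_Icc_left ht.1)).intervalIntegrable_of_Icc ht.2),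
      integral_interval_sub_left hΦg_int
        ((hΦg.mono (Icc_subset_Icc_right ht.2)).intervalIntegrable_of_Icc ht.1)]
  have deriv := (hΦ.hasDerivWithinAt.mul (hasDerivWithinAt_integral_of_continuousOn_Icc hg hx)).add
    ((hasDerivWithinAt_integral_of_continuousOn_Icc hΦg hx).const_sub (∫ s in a..b, Φ s * g s))
  exact (deriv.congr split (split x hx)).congr_deriv (by ring)

end GreenKernel

theorem rpow_one_sub_mul_rpow_self {s : ℝ} (hs : 0 ≤ s) (k : ℝ) : s ^ (1 - k) * s ^ k = s := by
  rw [← Real.rpow_add' hs (by norm_num), sub_add_cancel, Real.rpow_one]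

section RpowKernel

variable {k x : ℝ} {F : ℝ → ℝ}

theorem continuousOn_rpow_one_sub_div_sub_mul (hk : 0 ≤ k) {S : Set ℝ} (hS : S ⊆ Ici 0)
    (hF : ContinuousOn F S) (β : ℝ) :
    ContinuousOn (fun s => ((s ^ (1 - k) - 1) / (1 - k) - β) * (s ^ k * F s)) S := by
  have hrpow : Continuous fun s : ℝ => s ^ k := Real.continuous_rpow_const hk
  refine ContinuousOn.congr (f := fun s => ((s - s ^ k) / (1 - k) - β * s ^ k) * F s)
    ((((continuous_id.sub hrpow).div_const _).sub (hrpow.const_mul _)).continuousOn.mul hF)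
    fun s hs => ?_
  linear_combination (F s / (1 - k)) * rpow_one_sub_mul_rpow_self (hS hs) k

theorem hasDerivAt_rpow_one_sub_sub_one_div (hk : k ≠ 1) (hx : 0 < x) :
    HasDerivAt (fun t => (t ^ (1 - k) - 1) / (1 - k)) (x ^ (-k)) x := by
  have hk' : (1 : ℝ) - k ≠ 0 := sub_ne_zero.mpr hk.symm
  refine (((Real.hasDerivAt_rpow_const (Or.inl hx.ne')).sub_const 1).div_const
    (1 - k)).congr_deriv ?_
  rw [show (1 : ℝ) - k - 1 = -k by ring]
  field_simp

theorem norm_rpow_neg_mul_integral_rpow_mul_le (hk : 0 ≤ k) (hx : 0 < x) {M : ℝ}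
    (hM : ∀ s ∈ Ioc 0 x, ‖F s‖ ≤ M) :
    ‖x ^ (-k) * ∫ s in (0 : ℝ)..x, s ^ k * F s‖ ≤ M * x := by
  have hx0 : 0 ≤ x := hx.le
  have bound : ‖∫ s in (0 : ℝ)..x, s ^ k * F s‖ ≤ x ^ k * M * |x - 0| := by
    refine norm_integral_le_of_norm_le_const fun s hs => ?_
    rw [uIoc_of_le hx0] at hs
    rw [norm_mul, Real.norm_of_nonneg (Real.rpow_nonneg hs.1.le k)]
    exact mul_le_mul (Real.rpow_le_rpow hs.1.le hs.2 hk) (hM s hs)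
      (norm_nonneg _) (Real.rpow_nonneg hx0 k)
  calc ‖x ^ (-k) * ∫ s in (0 : ℝ)..x, s ^ k * F s‖
      ≤ x ^ (-k) * (x ^ k * M * |x - 0|) := by
        rw [norm_mul, Real.norm_of_nonneg (Real.rpow_nonneg hx0 _)]
        exact mul_le_mul_of_nonneg_left bound (Real.rpow_nonneg hx0 _)
    _ = M * x := by
        rw [sub_zero, abs_of_nonneg hx0, ← mul_assoc, ← mul_assoc, ← Real.rpow_add hx,
          neg_add_cancel, Real.rpow_zero, one_mul]

theorem tendsto_rpow_neg_mul_integral_rpow_mul (hk : 0 ≤ k) (hF : ContinuousOn F (Icc 0 1)) :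
    Tendsto (fun x => x ^ (-k) * ∫ s in (0 : ℝ)..x, s ^ k * F s) (𝓝[>] 0) (𝓝 0) := by
  obtain ⟨M, hM⟩ := isCompact_Icc.exists_bound_of_continuousOn hF
  have linear : Tendsto (fun x : ℝ => M * x) (𝓝[>] 0) (𝓝 0) := by
    simpa using ((continuous_const_mul M).tendsto 0).mono_left nhdsWithin_le_nhds
  refine squeeze_zero_norm' ?_ linear
  filter_upwards [Ioc_mem_nhdsGT (zero_lt_one' ℝ)] with x hx
  exact norm_rpow_neg_mul_integral_rpow_mul_le hk hx.1
    fun s hs => hM s ⟨hs.1.le, hs.2.trans hx.2⟩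

end RpowKernel

theorem stmt9 (k a b c : ℝ) (hk : 0 ≤ k) (hk1 : k ≠ 1) (ha : a ≠ 0)
    (F : ℝ → ℝ) (hF : ContinuousOn F (Icc 0 1)) :
    let G : ℝ → ℝ → ℝ := fun x s => ((max x s) ^ (1 - k) - 1) / (1 - k) - b / a
    let y : ℝ → ℝ := fun x => c / a + ∫ s in Icc (0:ℝ) 1, G x s * s ^ k * F s
    let d : ℝ → ℝ := fun x => x ^ (-k) * ∫ s in Icc (0:ℝ) x, s ^ k * F s
    (∀ x ∈ Ioc (0:ℝ) 1, HasDerivWithinAt y (d x) (Icc (0:ℝ) 1) x) ∧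
    (∀ x ∈ Ioo (0:ℝ) 1, HasDerivAt (fun t => t ^ k * d t) (x ^ k * F x) x) ∧
    Tendsto d (nhdsWithin 0 (Ioi 0)) (nhds 0) ∧
    a * y 1 + b * d 1 = c := by
  intro G y d
  set g : ℝ → ℝ := fun s => s ^ k * F s
  set Φ : ℝ → ℝ := fun t => (t ^ (1 - k) - 1) / (1 - k) - b / a
  have hg : ContinuousOn g (Icc 0 1) := (Real.continuous_rpow_const hk).continuousOn.mul hF
  have hΦg : ContinuousOn (fun s => Φ s * g s) (Icc 0 1) :=
    continuousOn_rpow_one_sub_div_sub_mul hk Icc_subset_Ici_self hF (b / a)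
  have hy : ∀ x, y x = c / a + ∫ s in (0 : ℝ)..1, Φ (max x s) * g s := fun x => by
    simp only [y, G, Φ, g, integral_Icc_eq_integral_Ioc, ← integral_of_le zero_le_one, mul_assoc]
  have hd : ∀ x, 0 ≤ x → d x = x ^ (-k) * ∫ s in (0 : ℝ)..x, g s := fun x hx => by
    simp only [d, g, integral_Icc_eq_integral_Ioc, ← integral_of_le hx]
  refine ⟨fun x hx => ?_, fun x hx => ?_, ?_, ?_⟩
  · have hΦ : HasDerivAt Φ (x ^ (-k)) x :=
      (hasDerivAt_rpow_one_sub_sub_one_div hk1 hx.1).sub_const _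
    rw [hd x hx.1.le, funext hy]
    exact (hasDerivWithinAt_integral_mul_comp_max hg hΦg hΦ (Ioc_subset_Icc_self hx)).const_add _
  · have primitive : (fun t => t ^ k * d t) =ᶠ[𝓝 x] fun t => ∫ s in (0 : ℝ)..t, g s := by
      filter_upwards [Ioi_mem_nhds hx.1] with t ht
      rw [hd t ht.le, ← mul_assoc, ← Real.rpow_add ht, add_neg_cancel, Real.rpow_zero, one_mul]
    exact ((hasDerivWithinAt_integral_of_continuousOn_Icc hg (Ioo_subset_Icc_self hx)).hasDerivAt
      (Icc_mem_nhds hx.1 hx.2)).congr_of_eventuallyEq primitive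
  · refine (tendsto_rpow_neg_mul_integral_rpow_mul hk hF).congr' ?_
    filter_upwards [self_mem_nhdsWithin] with x hx
    exact (hd x (le_of_lt hx)).symm
  · have hy1 : y 1 = c / a - b / a * ∫ s in (0 : ℝ)..1, g s := by
      rw [hy, integral_mul_comp_max (right_mem_Icc.mpr zero_le_one)
        (hg.intervalIntegrable_of_Icc zero_le_one) IntervalIntegrable.refl]
      simp only [Φ, Real.one_rpow, sub_self, zero_div, integral_same, add_zero]
      ring
    rw [hy1, hd 1 zero_le_one, Real.one_rpow, one_mul]
    field_simp
    ring
end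

section
/- (Green's function representation, shape factor $k=1$.) Let $a,b,c$ be reals with $a\ne 0$ and let $F\colon[0,1]\to\mathbb{R}$ be continuous. Define $G(x,s)=\ln\big(\max(x,s)\big)-\dfrac{b}{a}$ and $y(x)=\dfrac{c}{a}+\int_0^1 G(x,s)\,s\,F(s)\,ds$ for $x\in[0,1]$. Then: (i) $y$ is differentiable on $(0,1]$ with $y'(x)=\dfrac{1}{x}\int_0^x s\,F(s)\,ds$; (ii) the function $x\mapsto x\,y'(x)$ is differentiable on $(0,1)$ with $\dfrac{d}{dx}\big(x\,y'(x)\big)=x\,F(x)$ for all $x\in(0,1)$; (iii) $\lim_{x\to 0^+}y'(x)=0$; and (iv) $a\,y(1)+b\,y'(1)=c$. -/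
/-!
Splitting the integral at `s = x` gives, with `I x = ∫₀ˣ s F(s) ds` and `φ u = log u - b/a`,
`y x = c/a + φ x · I x + ∫ₓ¹ φ(s) s F(s) ds` on `(0, 1]`. By the fundamental theorem of calculus
the two terms `± φ x · x F(x)` of the derivative cancel, leaving `y' = I / x = d`. Hence
`x d x = I x` has derivative `x F(x)`, `d` is the difference quotient of `I` at `0`, which tends
to `I'(0) = 0 · F(0) = 0`, and at `x = 1` the logarithm vanishes, so `y 1 = (c - b · I 1) / a`.
-/

open MeasureTheory Set Filter Topology intervalIntegral

section
variable {f : ℝ → ℝ} {a b x : ℝ}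

theorem integral_Icc_eq_intervalIntegral (hab : a ≤ b) :
    ∫ s in Icc a b, f s = ∫ s in a..b, f s := by
  rw [integral_Icc_eq_integral_Ioc, integral_of_le hab]

theorem hasDerivWithinAt_integral_Icc_right (hf : ContinuousOn f (Icc a b)) (hx : x ∈ Icc a b) :
    HasDerivWithinAt (fun t => ∫ s in a..t, f s) (f x) (Icc a b) x := by
  have : Fact (x ∈ Icc a b) := ⟨hx⟩
  exact integral_hasDerivWithinAt_right
    ((hf.mono (Icc_subset_Icc_right hx.2)).intervalIntegrable_of_Icc hx.1)
    (hf.stronglyMeasurableAtFilter_nhdsWithin measurableSet_Icc x) (hf x hx)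

theorem hasDerivWithinAt_integral_Icc_left (hf : ContinuousOn f (Icc a b)) (hx : x ∈ Icc a b) :
    HasDerivWithinAt (fun t => ∫ s in t..b, f s) (-f x) (Icc a b) x := by
  have : Fact (x ∈ Icc a b) := ⟨hx⟩
  exact integral_hasDerivWithinAt_left
    ((hf.mono (Icc_subset_Icc_left hx.1)).intervalIntegrable_of_Icc hx.2)
    (hf.stronglyMeasurableAtFilter_nhdsWithin measurableSet_Icc x) (hf x hx)

theorem hasDerivWithinAt_integral_Icc_left_of_continuousOn_Ioc (hf : ContinuousOn f (Ioc a b))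
    (hx : x ∈ Ioc a b) :
    HasDerivWithinAt (fun t => ∫ s in t..b, f s) (-f x) (Icc a b) x := by
  obtain ⟨c, hac, hcx⟩ := exists_between hx.1
  exact (hasDerivWithinAt_integral_Icc_left (hf.mono (Icc_subset_Ioc_left hac))
    ⟨hcx.le, hx.2⟩).mono_of_mem_nhdsWithin <|
    mem_of_superset (inter_mem_nhdsWithin _ (Ioi_mem_nhds hcx)) fun _ hs => ⟨hs.2.le, hs.1.2⟩

theorem tendsto_inv_mul_integral_nhdsGT (hf : ContinuousOn f (Icc a b)) (hab : a < b) :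
    Tendsto (fun t => (t - a)⁻¹ * ∫ s in a..t, f s) (𝓝[>] a) (𝓝 (f a)) := by
  have h := (hasDerivWithinAt_integral_Icc_right hf ⟨le_rfl, hab.le⟩).mono_of_mem_nhdsWithin
    (Icc_mem_nhdsGE hab)
  refine ((hasDerivWithinAt_iff_tendsto_slope' self_notMem_Ioi).1 h.Ioi_of_Ici).congr fun t => ?_
  simp only [slope_def_field, integral_same, sub_zero, div_eq_inv_mul]

theorem integral_comp_max_mul {φ : ℝ → ℝ} (hφ : ContinuousOn φ (Icc x b))
    (hf : ContinuousOn f (Icc a b)) (hx : x ∈ Icc a b) :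
    ∫ s in a..b, φ (max x s) * f s = φ x * (∫ s in a..x, f s) + ∫ s in x..b, φ s * f s := by
  have hint : IntervalIntegrable (fun s => φ (max x s) * f s) volume a b := by
    refine ContinuousOn.intervalIntegrable_of_Icc (hx.1.trans hx.2) (.mul ?_ hf)
    exact hφ.comp (continuous_const.max continuous_id).continuousOn
      fun s hs => ⟨le_max_left _ _, max_le hx.2 hs.2⟩
  rw [← integral_add_adjacent_intervals (b := x) (hint.mono_set ?_) (hint.mono_set ?_),
    ← intervalIntegral.integral_const_mul]
  · congr 1
    · refine integral_congr fun s hs => ?_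
      rw [uIcc_of_le hx.1] at hs
      simp only [max_eq_left hs.2]
    · refine integral_congr fun s hs => ?_
      rw [uIcc_of_le hx.2] at hs
      simp only [max_eq_right hs.1]
  · exact uIcc_subset_uIcc_left (by rw [uIcc_of_le (hx.1.trans hx.2)]; exact hx)
  · exact uIcc_subset_uIcc_right (by rw [uIcc_of_le (hx.1.trans hx.2)]; exact hx)

theorem hasDerivWithinAt_integral_comp_max_mul {φ : ℝ → ℝ} {φ' : ℝ}
    (hφ : ContinuousOn φ (Ioc a b)) (hφx : HasDerivAt φ φ' x) (hf : ContinuousOn f (Icc a b))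
    (hx : x ∈ Ioc a b) :
    HasDerivWithinAt (fun t => ∫ s in a..b, φ (max t s) * f s) (φ' * ∫ s in a..x, f s)
      (Icc a b) x := by
  have hsplit : ∀ t ∈ Ioc a b, ∫ s in a..b, φ (max t s) * f s
      = φ t * (∫ s in a..t, f s) + ∫ s in t..b, φ s * f s := fun t ht =>
    integral_comp_max_mul (hφ.mono (Icc_subset_Ioc_left ht.1)) hf (Ioc_subset_Icc_self ht)
  have hI := hasDerivWithinAt_integral_Icc_right hf (Ioc_subset_Icc_self hx)
  have hJ : HasDerivWithinAt (fun t => ∫ s in t..b, φ s * f s) (-(φ x * f x)) (Icc a b) x :=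
    hasDerivWithinAt_integral_Icc_left_of_continuousOn_Ioc (hφ.mul (hf.mono Ioc_subset_Icc_self)) hx
  refine (((hφx.hasDerivWithinAt.mul hI).add hJ).congr_of_eventuallyEq ?_
    (hsplit x hx)).congr_deriv (by ring)
  exact mem_of_superset (inter_mem_nhdsWithin _ (Ioi_mem_nhds hx.1))
    fun t ht => hsplit t ⟨ht.2, ht.1.2⟩

end

theorem stmt10 (a b c : ℝ) (ha : a ≠ 0)
    (F : ℝ → ℝ) (hF : ContinuousOn F (Icc 0 1)) :
    let G : ℝ → ℝ → ℝ := fun x s => Real.log (max x s) - b / a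
    let y : ℝ → ℝ := fun x => c / a + ∫ s in Icc (0:ℝ) 1, G x s * s * F s
    let d : ℝ → ℝ := fun x => (1 / x) * ∫ s in Icc (0:ℝ) x, s * F s
    (∀ x ∈ Ioc (0:ℝ) 1, HasDerivWithinAt y (d x) (Icc (0:ℝ) 1) x) ∧
    (∀ x ∈ Ioo (0:ℝ) 1, HasDerivAt (fun t => t * d t) (x * F x) x) ∧
    Tendsto d (nhdsWithin 0 (Ioi 0)) (nhds 0) ∧
    a * y 1 + b * d 1 = c := by
  intro G y d
  set φ : ℝ → ℝ := fun u => Real.log u - b / a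
  have hφ : ContinuousOn φ (Ioc 0 1) :=
    (Real.continuousOn_log.mono fun u hu => hu.1.ne').sub continuousOn_const
  have hg : ContinuousOn (fun s => s * F s) (Icc 0 1) := continuousOn_id.mul hF
  have hy : y = fun t => c / a + ∫ s in (0:ℝ)..1, φ (max t s) * (s * F s) := by
    funext t
    simp only [y, G, φ, mul_assoc, integral_Icc_eq_intervalIntegral zero_le_one]
  have hd : ∀ t, 0 ≤ t → d t = t⁻¹ * ∫ s in (0:ℝ)..t, s * F s := fun t ht => by
    simp only [d, one_div, integral_Icc_eq_intervalIntegral ht]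
  refine ⟨fun x hx => ?_, fun x hx => ?_, ?_, ?_⟩
  · rw [hy, hd x hx.1.le]
    exact (hasDerivWithinAt_integral_comp_max_mul hφ
      ((Real.hasDerivAt_log hx.1.ne').sub_const _) hg hx).const_add _
  · refine ((hasDerivWithinAt_integral_Icc_right hg ⟨hx.1.le, hx.2.le⟩).hasDerivAt
      (Icc_mem_nhds hx.1 hx.2)).congr_of_eventuallyEq ?_
    filter_upwards [Ioi_mem_nhds hx.1] with t ht
    rw [hd t ht.le, mul_inv_cancel_left₀ ht.ne']
  · have h := tendsto_inv_mul_integral_nhdsGT hg zero_lt_one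
    simp only [zero_mul, sub_zero] at h
    refine h.congr' ?_
    filter_upwards [self_mem_nhdsWithin] with t ht
    rw [hd t ht.le]
  · rw [hy, hd 1 zero_le_one]
    beta_reduce
    rw [integral_comp_max_mul (hφ.mono (Icc_subset_Ioc_left zero_lt_one))
      hg ⟨zero_le_one, le_rfl⟩]
    simp only [φ, Real.log_one, integral_same, add_zero, inv_one]
    field_simp
    ring
end

section
/- (Converse: every solution of the singular BVP satisfies the integral equation, $k\ne1$.) Let $k\ge 0$ be a real number with $k\ne 1$, let $a,b,c$ be reals with $a\ne 0$, and let $F\colon[0,1]\to\mathbb{R}$ be continuous. Suppose $y\colon[0,1]\to\mathbb{R}$ is continuous, differentiable on $(0,1]$, the function $x\mapsto x^{k}y'(x)$ is differentiable on $(0,1)$ with $\dfrac{d}{dx}\big(x^{k}y'(x)\big)=x^{k}F(x)$ for all $x\in(0,1)$, $\lim_{x\to 0^+}x^{k}y'(x)=0$, and $a\,y(1)+b\,y'(1)=c$. Then for every $x\in[0,1]$, $y(x)=\dfrac{c}{a}+\int_0^1 G(x,s)\,s^{k}F(s)\,ds$, where $G(x,s)=\dfrac{\max(x,s)^{1-k}-1}{1-k}-\dfrac{b}{a}$.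 -/
open MeasureTheory Set Filter Topology

/-!
The flux `x ^ k * y' x` vanishes at `0` and has derivative `x ^ k * F x`, so it is
`H x = ∫₀ˣ s ^ k F s` and `y' = x ^ (-k) H`. Writing `φ` for the `k`-logarithm (`φ' = x ^ (-k)`),
the right-hand side is `(φ x - b / a) H x + ∫ₓ¹ (φ s - b / a) s ^ k F s`; its derivative is
`x ^ (-k) H x` because the two `F`-terms cancel. Hence it differs from `y` by a constant, which the
boundary condition at `1` evaluates once `y' 1 = H 1` is known. It is continuous at `0` because
`|H x| ≤ ‖F‖∞ x ^ k x` beats the singularity `x ^ (1 - k)` of `φ`.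
-/

section Calculus

variable {E : Type*} [NormedAddCommGroup E] [NormedSpace ℝ E]
  {f g g' : ℝ → E} {a b x : ℝ}

theorem ContinuousOn.hasDerivAt_integral_right [CompleteSpace E] (hf : ContinuousOn f (Icc a b))
    (hx : x ∈ Ioo a b) : HasDerivAt (fun u => ∫ t in a..u, f t) (f x) x :=
  intervalIntegral.integral_hasDerivAt_right
    ((hf.mono (uIcc_subset_Icc (left_mem_Icc.2 (hx.1.trans hx.2).le)
      (Ioo_subset_Icc_self hx))).intervalIntegrable)
    ((hf.mono Ioo_subset_Icc_self).stronglyMeasurableAtFilter isOpen_Ioo x hx)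
    (hf.continuousAt (Icc_mem_nhds hx.1 hx.2))

theorem ContinuousOn.hasDerivAt_integral_left [CompleteSpace E] (hf : ContinuousOn f (Icc a b))
    (hx : x ∈ Ioo a b) : HasDerivAt (fun u => ∫ t in u..b, f t) (-f x) x :=
  intervalIntegral.integral_hasDerivAt_left
    ((hf.mono (uIcc_subset_Icc (Ioo_subset_Icc_self hx)
      (right_mem_Icc.2 (hx.1.trans hx.2).le))).intervalIntegrable)
    ((hf.mono Ioo_subset_Icc_self).stronglyMeasurableAtFilter isOpen_Ioo x hx)
    (hf.continuousAt (Icc_mem_nhds hx.1 hx.2))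

theorem ContinuousOn.continuousOn_primitive (hab : a ≤ b) (hf : ContinuousOn f (Icc a b)) :
    ContinuousOn (fun u => ∫ t in a..u, f t) (Icc a b) := by
  simpa only [uIcc_of_le hab] using
    intervalIntegral.continuousOn_primitive_interval (hf.integrableOn_Icc.mono_set
      (uIcc_of_le hab).subset)

theorem ContinuousOn.continuousOn_primitive_left (hab : a ≤ b)
    (hf : ContinuousOn f (Icc a b)) : ContinuousOn (fun u => ∫ t in u..b, f t) (Icc a b) := by
  simpa only [uIcc_of_le hab] using
    intervalIntegral.continuousOn_primitive_interval_left (hf.integrableOn_Icc.mono_set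
      (uIcc_of_le hab).subset)

theorem eq_of_hasDerivAt_zero_of_continuousOn [CompleteSpace E] (hf : ContinuousOn f (Icc a b))
    (hf' : ∀ t ∈ Ioo a b, HasDerivAt f 0 t) (hx : x ∈ Icc a b) : f x = f b := by
  have h := intervalIntegral.integral_eq_sub_of_hasDerivAt_of_le hx.2
    (hf.mono (Icc_subset_Icc_left hx.1)) (fun t ht => hf' t ⟨hx.1.trans_lt ht.1, ht.2⟩)
    intervalIntegrable_const
  rw [intervalIntegral.integral_zero] at h
  exact (sub_eq_zero.1 h.symm).symm

theorem eq_integral_of_hasDerivAt_of_tendsto_zero [CompleteSpace E]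
    (hderiv : ∀ t ∈ Ioo a b, HasDerivAt g (g' t) t) (hint : IntervalIntegrable g' volume a b)
    (hlim : Tendsto g (𝓝[>] a) (𝓝 0)) (hx : x ∈ Ioo a b) : g x = ∫ t in a..x, g' t := by
  rw [intervalIntegral.integral_eq_sub_of_hasDerivAt_of_tendsto hx.1
    (fun t ht => hderiv t ⟨ht.1, ht.2.trans hx.2⟩)
    (hint.mono_set (uIcc_subset_uIcc_left (Icc_subset_uIcc (Ioo_subset_Icc_self hx))))
    hlim ((hderiv x hx).continuousAt.tendsto.mono_left nhdsWithin_le_nhds), sub_zero]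

theorem HasDerivWithinAt.eq_of_tendsto_deriv_left {L m : E} (hab : a < b)
    (hf : HasDerivWithinAt f L (Icc a b) b) (hderiv : ∀ t ∈ Ioo a b, HasDerivAt f (g' t) t)
    (hlim : Tendsto g' (𝓝[<] b) (𝓝 m)) : L = m := by
  have hleft : HasDerivWithinAt f m (Iic b) b := by
    refine hasDerivWithinAt_Iic_of_tendsto_deriv
      (fun t ht => (hderiv t ht).differentiableAt.differentiableWithinAt)
      (hf.continuousWithinAt.mono Ioo_subset_Icc_self) (Ioo_mem_nhdsLT hab) (hlim.congr' ?_)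
    filter_upwards [Ioo_mem_nhdsLT hab] with t ht using ((hderiv t ht).deriv).symm
  exact (uniqueDiffOn_Icc hab b (right_mem_Icc.2 hab.le)).eq_deriv _ hf
    (hleft.mono Icc_subset_Iic_self)

end Calculus

-- Tsallis' `q`-logarithm; at `q = 1` it is the junk value `0`, not `Real.log`.
noncomputable def qLog (q t : ℝ) : ℝ := (t ^ (1 - q) - 1) / (1 - q)

section QLog

variable {q t : ℝ}

theorem hasDerivAt_qLog (hq : q ≠ 1) (ht : 0 < t) : HasDerivAt (qLog q) (t ^ (-q)) t := by
  have h1q : 1 - q ≠ 0 := sub_ne_zero.2 hq.symm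
  have h := ((Real.hasDerivAt_rpow_const (p := 1 - q) (Or.inl ht.ne')).sub_const 1).div_const
    (1 - q)
  rw [sub_sub_cancel_left] at h
  exact h.congr_deriv (by field_simp)

@[simp]
theorem qLog_one : qLog q 1 = 0 := by simp [qLog]

theorem qLog_mul_rpow (hq : q ≠ 1) (ht : 0 ≤ t) : qLog q t * t ^ q = (t - t ^ q) / (1 - q) := by
  rcases ht.eq_or_lt with rfl | ht
  · rcases eq_or_ne q 0 with rfl | hq0
    · simp [qLog]
    · simp [qLog, Real.zero_rpow hq0, Real.zero_rpow (sub_ne_zero.2 hq.symm)]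
  · rw [qLog, div_mul_eq_mul_div, sub_mul, ← Real.rpow_add ht]
    simp

theorem continuousOn_qLog_mul_rpow (hq0 : 0 ≤ q) (hq : q ≠ 1) :
    ContinuousOn (fun t => qLog q t * t ^ q) (Ici 0) :=
  ((continuous_id.sub (Real.continuous_rpow_const hq0)).div_const _).continuousOn.congr
    fun _ ht => qLog_mul_rpow hq ht

end QLog

noncomputable def greenIntegral (k β : ℝ) (F : ℝ → ℝ) (x : ℝ) : ℝ :=
  ∫ s in Icc (0:ℝ) 1, (qLog k (max x s) - β) * s ^ k * F s

section GreenIntegral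

variable {k β : ℝ} {F : ℝ → ℝ}

theorem continuousOn_rpow_mul (hk : 0 ≤ k) (hF : ContinuousOn F (Icc 0 1)) :
    ContinuousOn (fun s => s ^ k * F s) (Icc 0 1) :=
  (Real.continuous_rpow_const hk).continuousOn.mul hF

theorem continuousOn_qLog_sub_mul_rpow_mul (hk : 0 ≤ k) (hk1 : k ≠ 1)
    (hF : ContinuousOn F (Icc 0 1)) :
    ContinuousOn (fun s => (qLog k s - β) * s ^ k * F s) (Icc 0 1) := by
  refine ContinuousOn.congr (f := fun s => (qLog k s * s ^ k - β * s ^ k) * F s) ?_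
    fun s _ => by ring
  exact (((continuousOn_qLog_mul_rpow hk hk1).mono Icc_subset_Ici_self).sub
    (continuousOn_const.mul (Real.continuous_rpow_const hk).continuousOn)).mul hF

theorem norm_integral_rpow_mul_le {M x : ℝ} (hk : 0 ≤ k) (hx : 0 ≤ x)
    (hM : ∀ s ∈ Ioc 0 x, ‖F s‖ ≤ M) : ‖∫ s in 0..x, s ^ k * F s‖ ≤ M * x ^ k * x := by
  have h := intervalIntegral.norm_integral_le_of_norm_le_const (a := 0) (b := x)
    (C := x ^ k * M) (f := fun s => s ^ k * F s) fun s hs => by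
      rw [uIoc_of_le hx] at hs
      rw [norm_mul, Real.norm_of_nonneg (Real.rpow_nonneg hs.1.le k)]
      exact mul_le_mul (Real.rpow_le_rpow hs.1.le hs.2 hk) (hM s hs) (norm_nonneg _)
        (Real.rpow_nonneg hx k)
  rwa [sub_zero, abs_of_nonneg hx, mul_comm (x ^ k)] at h

theorem tendsto_integral_rpow_mul_div_rpow (hk : 0 ≤ k) (hF : ContinuousOn F (Icc 0 1)) :
    Tendsto (fun x => (∫ s in 0..x, s ^ k * F s) / x ^ k) (𝓝[>] 0) (𝓝 0) := by
  obtain ⟨M, hM⟩ := isCompact_Icc.exists_bound_of_continuousOn hF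
  have hMx : Tendsto (fun x : ℝ => M * x) (𝓝[>] 0) (𝓝 0) := by
    simpa using ((continuous_const_mul M).tendsto 0).mono_left nhdsWithin_le_nhds
  refine squeeze_zero_norm' ?_ hMx
  filter_upwards [Ioo_mem_nhdsGT zero_lt_one] with x hx
  have hxk := Real.rpow_pos_of_pos hx.1 k
  rw [norm_div, Real.norm_of_nonneg hxk.le, div_le_iff₀ hxk, mul_right_comm]
  exact norm_integral_rpow_mul_le hk hx.1.le fun s hs => hM s ⟨hs.1.le, hs.2.trans hx.2.le⟩

theorem tendsto_rpow_neg_mul_integral_nhdsLT_one (hk : 0 ≤ k) (hF : ContinuousOn F (Icc 0 1)) :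
    Tendsto (fun x => x ^ (-k) * ∫ s in 0..x, s ^ k * F s) (𝓝[<] 1)
      (𝓝 (∫ s in 0..1, s ^ k * F s)) := by
  have h := ((Real.continuousAt_rpow_const 1 (-k) (Or.inl one_ne_zero)).tendsto.mono_left
    nhdsWithin_le_nhds).mul ((((continuousOn_rpow_mul hk hF).continuousOn_primitive
      zero_le_one) 1 (right_mem_Icc.2 zero_le_one)).tendsto.mono_left
      (nhdsWithin_le_of_mem (Icc_mem_nhdsLT zero_lt_one)))
  rwa [Real.one_rpow, one_mul] at h

theorem tendsto_qLog_sub_mul_integral (hk : 0 ≤ k) (hk1 : k ≠ 1)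
    (hF : ContinuousOn F (Icc 0 1)) :
    Tendsto (fun x => (qLog k x - β) * ∫ s in 0..x, s ^ k * F s) (𝓝[>] 0) (𝓝 0) := by
  have hcont : ContinuousWithinAt (fun x => qLog k x * x ^ k - β * x ^ k) (Ici 0) 0 :=
    ((continuousOn_qLog_mul_rpow hk hk1).sub
      (continuousOn_const.mul (Real.continuous_rpow_const hk).continuousOn)) 0 self_mem_Ici
  have h := ((hcont.tendsto.mono_left (nhdsWithin_mono _ Ioi_subset_Ici_self)).mul
    (tendsto_integral_rpow_mul_div_rpow hk hF))
  rw [mul_zero] at h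
  refine h.congr' ?_
  filter_upwards [self_mem_nhdsWithin] with x (hx : 0 < x)
  field_simp [(Real.rpow_pos_of_pos hx k).ne']

theorem greenIntegral_eq (hk : 0 ≤ k) (hk1 : k ≠ 1) (hF : ContinuousOn F (Icc 0 1)) {x : ℝ}
    (hx : x ∈ Icc 0 1) :
    greenIntegral k β F x = (qLog k x - β) * (∫ s in 0..x, s ^ k * F s) +
      ∫ s in x..1, (qLog k s - β) * s ^ k * F s := by
  have h0x : EqOn (fun s => (qLog k (max x s) - β) * s ^ k * F s)
      (fun s => (qLog k x - β) * (s ^ k * F s)) (uIcc 0 x) := fun s hs => by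
    rw [uIcc_of_le hx.1] at hs
    simp only [max_eq_left hs.2]
    ring
  have hx1 : EqOn (fun s => (qLog k (max x s) - β) * s ^ k * F s)
      (fun s => (qLog k s - β) * s ^ k * F s) (uIcc x 1) := fun s hs => by
    rw [uIcc_of_le hx.2] at hs
    simp only [max_eq_right hs.1]
  have hsub0x : uIcc 0 x ⊆ Icc 0 1 := uIcc_subset_Icc (left_mem_Icc.2 zero_le_one) hx
  have hsubx1 : uIcc x 1 ⊆ Icc 0 1 := uIcc_subset_Icc hx (right_mem_Icc.2 zero_le_one)
  rw [greenIntegral, integral_Icc_eq_integral_Ioc, ← intervalIntegral.integral_of_le zero_le_one,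
    ← intervalIntegral.integral_add_adjacent_intervals
      (((continuousOn_const.mul (continuousOn_rpow_mul hk hF)).mono hsub0x).congr
        h0x).intervalIntegrable
      (((continuousOn_qLog_sub_mul_rpow_mul hk hk1 hF).mono hsubx1).congr hx1).intervalIntegrable,
    intervalIntegral.integral_congr h0x, intervalIntegral.integral_congr hx1,
    intervalIntegral.integral_const_mul]

theorem greenIntegral_one (hk : 0 ≤ k) (hk1 : k ≠ 1) (hF : ContinuousOn F (Icc 0 1)) :
    greenIntegral k β F 1 = -β * ∫ s in 0..1, s ^ k * F s := by
  rw [greenIntegral_eq hk hk1 hF (right_mem_Icc.2 zero_le_one), qLog_one,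
    intervalIntegral.integral_same]
  ring

theorem continuousOn_greenIntegral (hk : 0 ≤ k) (hk1 : k ≠ 1) (hF : ContinuousOn F (Icc 0 1)) :
    ContinuousOn (greenIntegral k β F) (Icc 0 1) := by
  have hH := (continuousOn_rpow_mul hk hF).continuousOn_primitive zero_le_one
  have hqH : ContinuousOn (fun x => (qLog k x - β) * ∫ s in 0..x, s ^ k * F s) (Icc 0 1) := by
    intro x hx
    rcases hx.1.eq_or_lt with rfl | hx0
    · rw [← continuousWithinAt_sdiff_self, ContinuousWithinAt, intervalIntegral.integral_same,
        mul_zero]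
      exact (tendsto_qLog_sub_mul_integral hk hk1 hF).mono_left
        (nhdsWithin_mono _ fun t ht => lt_of_le_of_ne ht.1.1 (Ne.symm ht.2))
    · exact (((hasDerivAt_qLog hk1 hx0).continuousAt.continuousWithinAt).sub
        continuousWithinAt_const).mul (hH x hx)
  exact (hqH.add ((continuousOn_qLog_sub_mul_rpow_mul hk hk1 hF).continuousOn_primitive_left
    zero_le_one)).congr fun x hx => greenIntegral_eq hk hk1 hF hx

theorem hasDerivAt_greenIntegral (hk : 0 ≤ k) (hk1 : k ≠ 1) (hF : ContinuousOn F (Icc 0 1))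
    {x : ℝ} (hx : x ∈ Ioo 0 1) :
    HasDerivAt (greenIntegral k β F) (x ^ (-k) * ∫ s in 0..x, s ^ k * F s) x := by
  have h := (((hasDerivAt_qLog hk1 hx.1).sub_const β).mul
    ((continuousOn_rpow_mul hk hF).hasDerivAt_integral_right hx)).add
    ((continuousOn_qLog_sub_mul_rpow_mul (β := β) hk hk1 hF).hasDerivAt_integral_left hx)
  refine (h.congr_deriv (by ring)).congr_of_eventuallyEq ?_
  filter_upwards [Ioo_mem_nhds hx.1 hx.2] with t ht using
    greenIntegral_eq hk hk1 hF (Ioo_subset_Icc_self ht)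

end GreenIntegral

theorem stmt12 (k a b c : ℝ) (hk : 0 ≤ k) (hk1 : k ≠ 1) (ha : a ≠ 0)
    (F y y' : ℝ → ℝ) (hF : ContinuousOn F (Icc 0 1))
    (hyc : ContinuousOn y (Icc 0 1))
    (hderiv : ∀ x ∈ Ioc (0:ℝ) 1, HasDerivWithinAt y (y' x) (Icc (0:ℝ) 1) x)
    (hode : ∀ x ∈ Ioo (0:ℝ) 1, HasDerivAt (fun t => t ^ k * y' t) (x ^ k * F x) x)
    (hlim : Tendsto (fun x => x ^ k * y' x) (nhdsWithin 0 (Ioi 0)) (nhds 0))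
    (hbc : a * y 1 + b * y' 1 = c) :
    ∀ x ∈ Icc (0:ℝ) 1,
      y x = c / a + ∫ s in Icc (0:ℝ) 1,
        (((max x s) ^ (1 - k) - 1) / (1 - k) - b / a) * s ^ k * F s := by
  have hyD : ∀ x ∈ Ioo (0:ℝ) 1, HasDerivAt y (y' x) x := fun x hx =>
    (hderiv x (Ioo_subset_Ioc_self hx)).hasDerivAt (Icc_mem_nhds hx.1 hx.2)
  have hy' : ∀ x ∈ Ioo (0:ℝ) 1, y' x = x ^ (-k) * ∫ s in (0:ℝ)..x, s ^ k * F s := by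
    intro x hx
    rw [← eq_integral_of_hasDerivAt_of_tendsto_zero hode
      ((continuousOn_rpow_mul hk hF).intervalIntegrable_of_Icc zero_le_one) hlim hx,
      Real.rpow_neg hx.1.le, inv_mul_cancel_left₀ (Real.rpow_pos_of_pos hx.1 k).ne']
  have hy'1 : y' 1 = ∫ s in (0:ℝ)..1, s ^ k * F s := by
    refine (hderiv 1 (right_mem_Ioc.2 one_pos)).eq_of_tendsto_deriv_left one_pos hyD
      ((tendsto_rpow_neg_mul_integral_nhdsLT_one hk hF).congr' ?_)
    filter_upwards [Ioo_mem_nhdsLT one_pos] with x hx using (hy' x hx).symm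
  have hconst : ∀ x ∈ Icc (0:ℝ) 1,
      y x - greenIntegral k (b / a) F x = y 1 - greenIntegral k (b / a) F 1 :=
    fun x hx => eq_of_hasDerivAt_zero_of_continuousOn
      (hyc.sub (continuousOn_greenIntegral hk hk1 hF)) (fun t ht => by
        simpa [hy' t ht] using
          (hyD t ht).sub (hasDerivAt_greenIntegral (β := b / a) hk hk1 hF ht)) hx
  have hy1 : y 1 - greenIntegral k (b / a) F 1 = c / a := by
    rw [greenIntegral_one hk hk1 hF, ← hy'1, ← hbc]
    field_simp
    ring
  intro x hx
  change y x = c / a + greenIntegral k (b / a) F x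
  linarith [hconst x hx]
end
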